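/- Let a, b be integers with a ≥ 1, b ≥ 1 and a*b ≥ 4, let c, d be the associated recursive sequences and g n = gcd(c n, d n). Let p be a prime that divides exactly one of a and b. Then 2*p is the smallest positive integer k such that p divides g k; that is, p divides g (2*p), and p does not divide g m for any m with 0 < m < 2*p. -/

import Mathlib

/-! Modulo a prime `p ∣ a` the recursion decouples:
`c (2k) ≡ 0`, `c (2k+1) ≡ d (2k+1) ≡ (-1)^k` and `d (2k) ≡ (-1)^(k+1) k b`.
So `p` never divides `c` at an odd index, and at an even index `2k` it divides
`g (2k)` exactly when `p ∣ k b`, i.e. when `p ∣ k` if `p ∤ b`.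
Hence `p ∣ g n ↔ 2p ∣ n`; the case `p ∣ b` follows by the symmetry `g_{a,b} = g_{b,a}`. -/

/-- The pair of recursive sequences `(c n, d n)` associated to a generalized
Cartan matrix of rank two with off-diagonal entries `-a`, `-b`:
`c 0 = d 0 = 0`, `c 1 = d 1 = 1`, `c (j+1) = a * d j - c (j-1)`,
`d (j+1) = b * c j - d (j-1)`. -/
def KMcd (a b : ℤ) : ℕ → ℤ × ℤ
  | 0 => (0, 0)
  | 1 => (1, 1)
  | n + 2 => (a * (KMcd a b (n + 1)).2 - (KMcd a b n).1,
              b * (KMcd a b (n + 1)).1 - (KMcd a b n).2)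

/-- The sequence `c`. -/
def KMc (a b : ℤ) (n : ℕ) : ℤ := (KMcd a b n).1

/-- The sequence `d`. -/
def KMd (a b : ℤ) (n : ℕ) : ℤ := (KMcd a b n).2

/-- `g n = gcd (c n) (d n)`. -/
def KMg (a b : ℤ) (n : ℕ) : ℕ := Int.gcd (KMc a b n) (KMd a b n)

section KM

variable (a b : ℤ)

@[simp] lemma KMc_zero : KMc a b 0 = 0 := rfl
@[simp] lemma KMd_zero : KMd a b 0 = 0 := rfl
@[simp] lemma KMc_one : KMc a b 1 = 1 := rfl
@[simp] lemma KMd_one : KMd a b 1 = 1 := rfl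

lemma KMc_add_two (n : ℕ) : KMc a b (n + 2) = a * KMd a b (n + 1) - KMc a b n := rfl

lemma KMd_add_two (n : ℕ) : KMd a b (n + 2) = b * KMc a b (n + 1) - KMd a b n := rfl

lemma KMcd_swap (n : ℕ) : KMcd b a n = (KMcd a b n).swap := by
  induction n using Nat.strong_induction_on with
  | _ n ih =>
    match n, ih with
    | 0, _ => rfl
    | 1, _ => rfl
    | n + 2, ih => simp [KMcd, ih n (by omega), ih (n + 1) (by omega)]

lemma KMg_swap (n : ℕ) : KMg b a n = KMg a b n := by
  simp only [KMg, KMc, KMd, KMcd_swap a b n, Prod.fst_swap, Prod.snd_swap, Int.gcd_comm]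

lemma natCast_dvd_KMg_iff (p n : ℕ) :
    p ∣ KMg a b n ↔ (KMc a b n : ZMod p) = 0 ∧ (KMd a b n : ZMod p) = 0 := by
  simp only [ZMod.intCast_zmod_eq_zero_iff_dvd, KMg, ← Int.natCast_dvd_natCast,
    Int.dvd_coe_gcd_iff]

lemma cast_KMcd_of_cast_eq_zero {R : Type*} [CommRing R] (ha : (a : R) = 0) (k : ℕ) :
    (KMc a b (2 * k) : R) = 0 ∧ (KMc a b (2 * k + 1) : R) = (-1) ^ k ∧
      (KMd a b (2 * k) : R) = (-1) ^ (k + 1) * k * b ∧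
      (KMd a b (2 * k + 1) : R) = (-1) ^ k := by
  induction k with
  | zero => simp
  | succ k ih =>
    obtain ⟨hc₀, hc₁, hd₀, hd₁⟩ := ih
    have hc₂ : (KMc a b (2 * k + 2) : R) = 0 := by
      push_cast [KMc_add_two, ha, hc₀]; ring
    refine ⟨hc₂, ?_, ?_, ?_⟩
    · push_cast [show 2 * (k + 1) + 1 = 2 * k + 1 + 2 by ring, KMc_add_two, ha, hc₁]; ring
    · push_cast [show 2 * (k + 1) = 2 * k + 2 by ring, KMd_add_two, hc₁, hd₀]; ring
    · push_cast [show 2 * (k + 1) + 1 = 2 * k + 2 + 1 by ring, KMd_add_two, hc₂, hd₁]; ring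

lemma dvd_KMg_iff_of_dvd_left {p : ℕ} (hp : p.Prime) (hpa : (p : ℤ) ∣ a)
    (hpb : ¬ (p : ℤ) ∣ b) (n : ℕ) : p ∣ KMg a b n ↔ 2 * p ∣ n := by
  have := Fact.mk hp
  have ha : (a : ZMod p) = 0 := (ZMod.intCast_zmod_eq_zero_iff_dvd a p).2 hpa
  have hb : (b : ZMod p) ≠ 0 := mt (ZMod.intCast_zmod_eq_zero_iff_dvd b p).1 hpb
  rw [natCast_dvd_KMg_iff]
  obtain ⟨k, rfl | rfl⟩ := Nat.even_or_odd' n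
  · obtain ⟨hc₀, -, hd₀, -⟩ := cast_KMcd_of_cast_eq_zero a b ha k
    simp [hc₀, hd₀, hb, ZMod.natCast_eq_zero_iff, Nat.mul_dvd_mul_iff_left]
  · obtain ⟨-, hc₁, -, -⟩ := cast_KMcd_of_cast_eq_zero a b ha k
    simp only [hc₁, neg_one_pow_ne_zero, false_and, false_iff]
    exact fun h => by have := (dvd_mul_right 2 p).trans h; omega

end KM

theorem smallest_k_eq_two_p_of_divides_exactly_one_general
    (a b : ℤ)
    (p : ℕ) (hp : p.Prime)
    (hone : ((p : ℤ) ∣ a ∧ ¬ (p : ℤ) ∣ b) ∨ (¬ (p : ℤ) ∣ a ∧ (p : ℤ) ∣ b)) :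
    p ∣ KMg a b (2 * p) ∧ ∀ m : ℕ, 0 < m → m < 2 * p → ¬ p ∣ KMg a b m := by
  have key : ∀ n, p ∣ KMg a b n ↔ 2 * p ∣ n := by
    rcases hone with ⟨hpa, hpb⟩ | ⟨hpa, hpb⟩
    · exact dvd_KMg_iff_of_dvd_left a b hp hpa hpb
    · simpa only [KMg_swap] using dvd_KMg_iff_of_dvd_left b a hp hpb hpa
  refine ⟨(key _).2 dvd_rfl, fun m hm₀ hm hdvd => ?_⟩
  exact absurd (Nat.le_of_dvd hm₀ ((key m).1 hdvd)) (by omega)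

theorem smallest_k_eq_two_p_of_divides_exactly_one
    (a b : ℤ) (ha : 1 ≤ a) (hb : 1 ≤ b) (hab : 4 ≤ a * b)
    (p : ℕ) (hp : p.Prime)
    (hone : ((p : ℤ) ∣ a ∧ ¬ (p : ℤ) ∣ b) ∨ (¬ (p : ℤ) ∣ a ∧ (p : ℤ) ∣ b)) :
    p ∣ KMg a b (2 * p) ∧ ∀ m : ℕ, 0 < m → m < 2 * p → ¬ p ∣ KMg a b m :=
  smallest_k_eq_two_p_of_divides_exactly_one_general a b p hp hone
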